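/- Let H be a finite-dimensional complex inner product space, let U, W, V be unitary operators on H, let {e_i} be an orthonormal eigenbasis of W and {f_k} an orthonormal eigenbasis of V, and let ρ be a density operator on H. Then for every fixed index k₂, marginalizing the combined quantum amplitude over all other indices yields a probability: Σ_{i₂,i₃,k₁} Ã_ρ(i₂,i₃,k₁,k₂) = ⟨f_{k₂}, ρ f_{k₂}⟩, which is a real number lying in the interval [0, 1]. -/

import Mathlib

open scoped InnerProductSpace
open ContinuousLinearMap

/-!
Summing over `k₁` with `∑ₖ |f k⟩⟨f k| = 1`, then over `i₂` and `i₃` with `∑ᵢ |e i⟩⟨e i| = 1`,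
collapses the amplitude to `⟨f k₂, U† U ρ U† U f k₂⟩`, and `U† U = 1` leaves `⟨f k₂, ρ f k₂⟩`.
That diagonal entry of `ρ` is `≥ 0` by positivity and, being one of the nonnegative summands of
`tr ρ = 1` in the orthonormal basis `f`, it is `≤ 1`.
-/

section

variable {𝕜 H ι : Type*} [RCLike 𝕜] [NormedAddCommGroup H] [InnerProductSpace 𝕜 H]
  [Fintype ι]

namespace OrthonormalBasis

theorem sum_inner_map_mul_inner [CompleteSpace H] (b : OrthonormalBasis ι 𝕜 H)
    (A : H →L[𝕜] H) (x y : H) :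
    ∑ i, ⟪x, A (b i)⟫_𝕜 * ⟪b i, y⟫_𝕜 = ⟪x, A y⟫_𝕜 := by
  simp only [← adjoint_inner_left A, b.sum_inner_mul_inner]

end OrthonormalBasis

theorem sum_amplitude_eq_inner [CompleteSpace H] {κ : Type*} [Fintype κ]
    (e : OrthonormalBasis ι 𝕜 H) (f : OrthonormalBasis κ 𝕜 H) {U : H →L[𝕜] H}
    (hU : star U * U = 1) (ρ : H →L[𝕜] H) (x : H) :
    ∑ i₂, ∑ i₃, ∑ k₁, ⟪e i₃, U x⟫_𝕜 * ⟪x, adjoint U (e i₂)⟫_𝕜 *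
        ⟪e i₂, U (f k₁)⟫_𝕜 * ⟪f k₁, ρ (adjoint U (e i₃))⟫_𝕜 = ⟪x, ρ x⟫_𝕜 := by
  have hUU (y : H) : adjoint U (U y) = y := congr($hU y)
  calc _ = ∑ i₃, ⟪e i₃, U x⟫_𝕜 * ∑ i₂, ⟪x, adjoint U (e i₂)⟫_𝕜 *
        ∑ k₁, ⟪e i₂, U (f k₁)⟫_𝕜 * ⟪f k₁, ρ (adjoint U (e i₃))⟫_𝕜 := by
        simp only [Finset.mul_sum, mul_assoc]
        exact Finset.sum_comm
    _ = ∑ i₃, ⟪e i₃, U x⟫_𝕜 * ⟪x, ρ (adjoint U (e i₃))⟫_𝕜 := by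
        simp only [e.sum_inner_map_mul_inner, f.sum_inner_map_mul_inner, hUU]
    _ = ∑ i₃, ⟪x, (ρ ∘L adjoint U) (e i₃)⟫_𝕜 * ⟪e i₃, U x⟫_𝕜 := by
        simp only [comp_apply, mul_comm]
    _ = ⟪x, ρ x⟫_𝕜 := by
        rw [e.sum_inner_map_mul_inner, comp_apply, hUU]

namespace ContinuousLinearMap.IsPositive

open scoped ComplexOrder

theorem inner_apply_le_trace (b : OrthonormalBasis ι 𝕜 H) {ρ : H →L[𝕜] H}
    (hρ : ρ.IsPositive) (j : ι) :
    ⟪b j, ρ (b j)⟫_𝕜 ≤ LinearMap.trace 𝕜 H ρ.toLinearMap := by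
  rw [LinearMap.trace_eq_sum_inner _ b]
  exact Finset.single_le_sum (fun i _ => hρ.inner_nonneg_right (b i)) (Finset.mem_univ j)

end ContinuousLinearMap.IsPositive

end

theorem combined_amplitude_marginal_k₂_general
    {H : Type*} [NormedAddCommGroup H] [InnerProductSpace ℂ H] [FiniteDimensional ℂ H]
    {I K : Type*} [Fintype I] [Fintype K]
    (U ρ : H →L[ℂ] H)
    (hU : U ∈ unitary (H →L[ℂ] H))
    (e : OrthonormalBasis I ℂ H) (f : OrthonormalBasis K ℂ H)
    (hρpos : ρ.IsPositive)
    (hρtr : LinearMap.trace ℂ H ρ.toLinearMap = 1)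
    (k₂ : K) :
    (∑ i₂ : I, ∑ i₃ : I, ∑ k₁ : K,
      ⟪e i₃, U (f k₂)⟫_ℂ * ⟪f k₂, (adjoint U) (e i₂)⟫_ℂ *
        ⟪e i₂, U (f k₁)⟫_ℂ * ⟪f k₁, ρ ((adjoint U) (e i₃))⟫_ℂ
      = ⟪f k₂, ρ (f k₂)⟫_ℂ)
    ∧ (⟪f k₂, ρ (f k₂)⟫_ℂ).im = 0
    ∧ (⟪f k₂, ρ (f k₂)⟫_ℂ).re ∈ Set.Icc (0 : ℝ) 1 := by
  have hnonneg := Complex.le_def.mp (hρpos.inner_nonneg_right (f k₂))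
  have hle_one := hρpos.inner_apply_le_trace f k₂
  rw [hρtr, Complex.le_def] at hle_one
  exact ⟨sum_amplitude_eq_inner e f (Unitary.star_mul_self_of_mem hU) ρ (f k₂),
    hnonneg.2.symm, hnonneg.1, hle_one.1⟩

/-- **Marginalizing `Ã_ρ` over all indices except `k₂` yields a probability:**
`∑_{i₂,i₃,k₁} Ã_ρ(i₂,i₃,k₁,k₂) = ⟨f_{k₂}, ρ f_{k₂}⟩`, a real number in `[0,1]`. -/
theorem combined_amplitude_marginal_k₂
    {H : Type*} [NormedAddCommGroup H] [InnerProductSpace ℂ H] [FiniteDimensional ℂ H]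
    {I K : Type*} [Fintype I] [Fintype K]
    (U W V ρ : H →L[ℂ] H)
    (hU : U ∈ unitary (H →L[ℂ] H))
    (hW : W ∈ unitary (H →L[ℂ] H))
    (hV : V ∈ unitary (H →L[ℂ] H))
    (e : OrthonormalBasis I ℂ H) (f : OrthonormalBasis K ℂ H)
    (hWe : ∀ i, ∃ c : ℂ, W (e i) = c • e i)
    (hVf : ∀ k, ∃ c : ℂ, V (f k) = c • f k)
    (hρpos : ρ.IsPositive)
    (hρtr : LinearMap.trace ℂ H ρ.toLinearMap = 1)
    (k₂ : K) :
    (∑ i₂ : I, ∑ i₃ : I, ∑ k₁ : K,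
      ⟪e i₃, U (f k₂)⟫_ℂ * ⟪f k₂, (adjoint U) (e i₂)⟫_ℂ *
        ⟪e i₂, U (f k₁)⟫_ℂ * ⟪f k₁, ρ ((adjoint U) (e i₃))⟫_ℂ
      = ⟪f k₂, ρ (f k₂)⟫_ℂ)
    ∧ (⟪f k₂, ρ (f k₂)⟫_ℂ).im = 0
    ∧ (⟪f k₂, ρ (f k₂)⟫_ℂ).re ∈ Set.Icc (0 : ℝ) 1 :=
  combined_amplitude_marginal_k₂_general U ρ hU e f hρpos hρtr k₂
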